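/- Let θ₁, θ₂ ∈ (0, π/2) and let h be a bounded holomorphic function on Σ_{θ₁} × Σ_{θ₂} with |h(z₁,z₂)| ≤ C (|z₁|^{s₁}/(1+|z₁|^{2s₁}))(|z₂|^{s₂}/(1+|z₂|^{2s₂})) for some C, s₁, s₂ > 0. Fix ρ ∈ (0,1) and set φ_ρ(z) = (1-ρ)+ρz. Define h̃(z₁,z₂) = h(φ_ρ(z₁), φ_ρ(z₂)) − h(φ_ρ(z₁), 1-ρ)/(1+z₂) − h(1-ρ, φ_ρ(z₂))/(1+z₁) + h(1-ρ, 1-ρ)/((1+z₁)(1+z₂)). Then h̃ ∈ H^∞₀(Σ_{θ₁} × Σ_{θ₂}), i.e., h̃ is bounded holomorphic and admits a bound of the same product decay type. -/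

import Mathlib

/-!
In each variable separately, `h̃` is the one-variable regularisation `G(φ_ρ z) − G(1−ρ)/(1+z)` of
a holomorphic `G` on a sector with `‖G w‖ ≤ M min(|w|, |w|⁻¹)^a`. For small `z` this is `O(|z|)`
by the Schwarz lemma on a disc around `1 − ρ` inside the sector; for large `z` it inherits the
decay of `G`, since `|φ_ρ z| ≥ ρ|z|` on the right half-plane. This bounds `|h̃|` by
`K min(|z₁|, |z₁|⁻¹)^a₁` uniformly in `z₂` and by `K min(|z₂|, |z₂|⁻¹)^a₂` uniformly in `z₁`.
Since `min(u₁², u₂²) ≤ u₁u₂`, the two combine into a product bound with halved exponents, and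
`min(r, r⁻¹)^s` is comparable to `r^s / (1 + r^(2s))`.
-/

def Sector (θ : ℝ) : Set ℂ := {z : ℂ | z ≠ 0 ∧ |Complex.arg z| < θ}

open Complex Metric Set

section Sector

variable {θ : ℝ} {z w : ℂ}

theorem mem_sector_iff (hθ₀ : 0 ≤ θ) (hθ : θ ≤ Real.pi) :
    z ∈ Sector θ ↔ ‖z‖ * Real.cos θ < z.re := by
  constructor
  · rintro ⟨hz, harg⟩
    have hcos : Real.cos θ < Real.cos (arg z) := by
      rw [← Real.cos_abs (arg z)]
      exact Real.cos_lt_cos_of_nonneg_of_le_pi (abs_nonneg _) hθ harg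
    rw [← norm_mul_cos_arg z]
    exact mul_lt_mul_of_pos_left hcos (norm_pos_iff.mpr hz)
  · intro h
    have hz : z ≠ 0 := by rintro rfl; simp at h
    refine ⟨hz, ?_⟩
    rw [← norm_mul_cos_arg z, ← Real.cos_abs (arg z)] at h
    have hcos := lt_of_mul_lt_mul_left h (norm_nonneg z)
    exact (Real.strictAntiOn_cos.lt_iff_gt ⟨hθ₀, hθ⟩ ⟨abs_nonneg _, abs_arg_le_pi z⟩).mp hcos

theorem isOpen_sector (hθ₀ : 0 ≤ θ) (hθ : θ ≤ Real.pi) : IsOpen (Sector θ) := by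
  have : Sector θ = {z : ℂ | ‖z‖ * Real.cos θ < z.re} := Set.ext fun _ => mem_sector_iff hθ₀ hθ
  rw [this]
  exact isOpen_lt (by fun_prop) continuous_re

theorem ofReal_mem_sector (hθ : 0 < θ) {x : ℝ} (hx : 0 < x) : (x : ℂ) ∈ Sector θ :=
  ⟨ofReal_ne_zero.mpr hx.ne', by rwa [arg_ofReal_of_nonneg hx.le, abs_zero]⟩

theorem ofReal_mul_mem_sector {r : ℝ} (hr : 0 < r) (hz : z ∈ Sector θ) : (r : ℂ) * z ∈ Sector θ :=
  ⟨mul_ne_zero (ofReal_ne_zero.mpr hr.ne') hz.1, by rw [arg_real_mul z hr]; exact hz.2⟩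

theorem pos_of_mem_sector (hz : z ∈ Sector θ) : 0 < θ :=
  (abs_nonneg _).trans_lt hz.2

theorem re_pos_of_mem_sector (hθ : θ ≤ Real.pi / 2) (hz : z ∈ Sector θ) : 0 < z.re :=
  (abs_arg_lt_pi_div_two_iff.mp (hz.2.trans_le hθ)).resolve_right hz.1

theorem add_mem_sector (hθ : θ ≤ Real.pi / 2) (hz : z ∈ Sector θ) (hw : w ∈ Sector θ) :
    z + w ∈ Sector θ := by
  have hθ₀ := (pos_of_mem_sector hz).le
  have hθπ : θ ≤ Real.pi := hθ.trans (by linarith [Real.pi_pos])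
  have hcos : 0 ≤ Real.cos θ := Real.cos_nonneg_of_neg_pi_div_two_le_of_le (by linarith) hθ
  rw [mem_sector_iff hθ₀ hθπ] at hz hw ⊢
  calc ‖z + w‖ * Real.cos θ ≤ (‖z‖ + ‖w‖) * Real.cos θ :=
        mul_le_mul_of_nonneg_right (norm_add_le z w) hcos
    _ < (z + w).re := by rw [add_re]; linarith

theorem ofReal_add_ofReal_mul_mem_sector (hθ : θ ≤ Real.pi / 2) {a b : ℝ}
    (ha : 0 < a) (hb : 0 < b) (hz : z ∈ Sector θ) : (a : ℂ) + b * z ∈ Sector θ :=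
  add_mem_sector hθ (ofReal_mem_sector (pos_of_mem_sector hz) ha) (ofReal_mul_mem_sector hb hz)

end Sector

theorem one_le_norm_one_add {z : ℂ} (hz : 0 ≤ z.re) : 1 ≤ ‖1 + z‖ :=
  (by simp; linarith : (1 : ℝ) ≤ (1 + z).re).trans (re_le_norm _)

theorem one_add_ne_zero {z : ℂ} (hz : 0 ≤ z.re) : 1 + z ≠ 0 :=
  norm_pos_iff.mp (one_pos.trans_le (one_le_norm_one_add hz))

theorem norm_le_norm_ofReal_add {a : ℝ} (ha : 0 ≤ a) {z : ℂ} (hz : 0 ≤ z.re) :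
    ‖z‖ ≤ ‖(a : ℂ) + z‖ := by
  rw [← sq_le_sq₀ (norm_nonneg _) (norm_nonneg _), Complex.sq_norm, Complex.sq_norm,
    normSq_apply, normSq_apply]
  simp only [add_re, add_im, ofReal_re, ofReal_im, zero_add]
  nlinarith

noncomputable def decayWeight (s r : ℝ) : ℝ := r ^ s / (1 + r ^ (2 * s))

section Weights

variable {r s a : ℝ}

theorem min_inv_pos (hr : 0 < r) : 0 < min r r⁻¹ := lt_min hr (inv_pos.mpr hr)

theorem min_inv_le_one : min r r⁻¹ ≤ 1 := by
  rcases le_total r 1 with h | h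
  · exact (min_le_left _ _).trans h
  · exact (min_le_right _ _).trans (inv_le_one_of_one_le₀ h)

theorem min_inv_of_le_one (hr : 0 < r) (h : r ≤ 1) : min r r⁻¹ = r :=
  min_eq_left (h.trans ((one_le_inv₀ hr).mpr h))

theorem min_inv_of_one_le (h : 1 ≤ r) : min r r⁻¹ = r⁻¹ :=
  min_eq_right ((inv_le_one_of_one_le₀ h).trans h)

theorem min_inv_le_rpow (hr : 0 < r) (ha : a ≤ 1) : min r r⁻¹ ≤ min r r⁻¹ ^ a := by
  simpa using Real.rpow_le_rpow_of_exponent_ge (min_inv_pos hr) min_inv_le_one ha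

theorem min_inv_rpow (hr : 0 < r) (hs : 0 ≤ s) : min r r⁻¹ ^ s = min (r ^ s) (r ^ s)⁻¹ := by
  rw [← Real.inv_rpow hr.le]
  exact (Real.monotoneOn_rpow_Ici_of_exponent_nonneg hs).map_min hr.le (inv_pos.mpr hr).le

theorem rpow_two_mul (hr : 0 ≤ r) : r ^ (2 * s) = (r ^ s) ^ 2 := by
  rw [← Real.rpow_mul_natCast hr, Nat.cast_two, mul_comm]

theorem decayWeight_eq (hr : 0 < r) : decayWeight s r = r ^ s / (1 + (r ^ s) ^ 2) := by
  rw [decayWeight, rpow_two_mul hr.le]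

theorem div_one_add_sq_le_min_inv {x : ℝ} (hx : 0 < x) : x / (1 + x ^ 2) ≤ min x x⁻¹ := by
  refine le_min ?_ ?_
  · exact div_le_self hx.le (by nlinarith)
  · rw [div_le_iff₀ (by positivity), inv_mul_eq_div, le_div_iff₀ hx]; nlinarith

theorem min_inv_le_two_mul_div_one_add_sq {x : ℝ} (hx : 0 < x) :
    min x x⁻¹ ≤ 2 * (x / (1 + x ^ 2)) := by
  rw [mul_div_assoc', le_div_iff₀ (by positivity)]
  rcases le_total x 1 with h | h
  · rw [min_inv_of_le_one hx h]; nlinarith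
  · rw [min_inv_of_one_le h, inv_mul_eq_div, div_le_iff₀ hx]; nlinarith

theorem decayWeight_le_min_inv_rpow (hr : 0 < r) (ha : 0 ≤ a) (has : a ≤ s) :
    decayWeight s r ≤ min r r⁻¹ ^ a := by
  calc decayWeight s r ≤ min r r⁻¹ ^ s := by
        rw [decayWeight_eq hr, min_inv_rpow hr (ha.trans has)]
        exact div_one_add_sq_le_min_inv (Real.rpow_pos_of_pos hr s)
    _ ≤ min r r⁻¹ ^ a := Real.rpow_le_rpow_of_exponent_ge (min_inv_pos hr) min_inv_le_one has

theorem min_inv_rpow_le_two_mul_decayWeight (hr : 0 < r) (hs : 0 ≤ s) :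
    min r r⁻¹ ^ s ≤ 2 * decayWeight s r := by
  rw [decayWeight_eq hr, min_inv_rpow hr hs]
  exact min_inv_le_two_mul_div_one_add_sq (Real.rpow_pos_of_pos hr s)

theorem mul_decayWeight_mul_decayWeight_le {C r₁ r₂ s₁ s₂ : ℝ} (hC : 0 ≤ C) (hr₁ : 0 < r₁)
    (hr₂ : 0 < r₂) (hs₂ : 0 ≤ s₂) (ha : 0 ≤ a) (has : a ≤ s₁) :
    C * decayWeight s₁ r₁ * decayWeight s₂ r₂ ≤ C * min r₁ r₁⁻¹ ^ a := by
  have h₂ : decayWeight s₂ r₂ ≤ 1 := by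
    simpa using decayWeight_le_min_inv_rpow hr₂ le_rfl hs₂
  have h₂' : 0 ≤ decayWeight s₂ r₂ := by unfold decayWeight; positivity
  calc C * decayWeight s₁ r₁ * decayWeight s₂ r₂ ≤ C * min r₁ r₁⁻¹ ^ a * 1 := by
        gcongr
        exact decayWeight_le_min_inv_rpow hr₁ ha has
    _ = C * min r₁ r₁⁻¹ ^ a := mul_one _

theorem le_mul_mul_of_le_mul_sq {X K u₁ u₂ : ℝ} (hK : 0 ≤ K) (hu₁ : 0 ≤ u₁) (hu₂ : 0 ≤ u₂)
    (h₁ : X ≤ K * u₁ ^ 2) (h₂ : X ≤ K * u₂ ^ 2) : X ≤ K * (u₁ * u₂) := by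
  rcases le_total u₁ u₂ with h | h
  · exact h₁.trans (by rw [sq]; gcongr)
  · exact h₂.trans (by rw [sq, mul_comm u₁]; gcongr)

theorem le_mul_decayWeight_mul_decayWeight {X K r₁ r₂ a₁ a₂ : ℝ} (hK : 0 ≤ K) (hr₁ : 0 < r₁)
    (hr₂ : 0 < r₂) (ha₁ : 0 ≤ a₁) (ha₂ : 0 ≤ a₂)
    (h₁ : X ≤ K * min r₁ r₁⁻¹ ^ a₁) (h₂ : X ≤ K * min r₂ r₂⁻¹ ^ a₂) :
    X ≤ 4 * K * decayWeight (a₁ / 2) r₁ * decayWeight (a₂ / 2) r₂ := by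
  rw [← mul_div_cancel₀ a₁ two_ne_zero, rpow_two_mul (min_inv_pos hr₁).le] at h₁
  rw [← mul_div_cancel₀ a₂ two_ne_zero, rpow_two_mul (min_inv_pos hr₂).le] at h₂
  calc X ≤ K * (min r₁ r₁⁻¹ ^ (a₁ / 2) * min r₂ r₂⁻¹ ^ (a₂ / 2)) :=
        le_mul_mul_of_le_mul_sq hK (by positivity) (by positivity) h₁ h₂
    _ ≤ K * (2 * decayWeight (a₁ / 2) r₁ * (2 * decayWeight (a₂ / 2) r₂)) := by
        gcongr
        · exact mul_nonneg zero_le_two (by unfold decayWeight; positivity)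
        · exact min_inv_rpow_le_two_mul_decayWeight hr₁ (by positivity)
        · exact min_inv_rpow_le_two_mul_decayWeight hr₂ (by positivity)
    _ = 4 * K * decayWeight (a₁ / 2) r₁ * decayWeight (a₂ / 2) r₂ := by ring

end Weights

theorem DifferentiableOn.norm_sub_le_of_ball_subset {E : Type*} [NormedAddCommGroup E]
    [NormedSpace ℂ E] {f : ℂ → E} {U : Set ℂ} {c w : ℂ} {M δ : ℝ}
    (hf : DifferentiableOn ℂ f U) (hfM : ∀ z ∈ U, ‖f z‖ ≤ M) (hδ : 0 < δ)
    (hball : ball c δ ⊆ U) (hw : w ∈ U) : ‖f w - f c‖ ≤ 2 * M / δ * ‖w - c‖ := by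
  have hc : c ∈ U := hball (mem_ball_self hδ)
  have hfc : ∀ z ∈ U, ‖f z - f c‖ ≤ 2 * M := fun z hz =>
    (norm_sub_le _ _).trans (by linarith [hfM z hz, hfM c hc])
  by_cases hwc : w ∈ ball c δ
  · have hmaps : MapsTo f (ball c δ) (closedBall (f c) (2 * M)) := fun z hz => by
      rw [mem_closedBall, dist_eq_norm]; exact hfc z (hball hz)
    simpa only [dist_eq_norm] using
      Complex.dist_le_div_mul_dist_of_mapsTo_ball (hf.mono hball) hmaps hwc
  · have hM : 0 ≤ M := (norm_nonneg _).trans (hfM c hc)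
    rw [mem_ball, dist_eq_norm, not_lt] at hwc
    calc ‖f w - f c‖ ≤ 2 * M * 1 := by rw [mul_one]; exact hfc w hw
      _ ≤ 2 * M * (‖w - c‖ / δ) := by gcongr; rwa [one_le_div hδ]
      _ = 2 * M / δ * ‖w - c‖ := by ring

noncomputable def regularize (ρ : ℝ) (G : ℂ → ℂ) (z : ℂ) : ℂ :=
  G (((1 - ρ : ℝ) : ℂ) + (ρ : ℂ) * z) - G ((1 - ρ : ℝ) : ℂ) / (1 + z)

-- `regularize₂ ρ h` is the function `h̃` of the statement.
noncomputable def regularize₂ (ρ : ℝ) (h : ℂ → ℂ → ℂ) (z₁ z₂ : ℂ) : ℂ :=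
  regularize ρ (fun w => regularize ρ (h w) z₂) z₁

theorem regularize₂_comm (ρ : ℝ) (h : ℂ → ℂ → ℂ) (z₁ z₂ : ℂ) :
    regularize₂ ρ h z₁ z₂ = regularize₂ ρ (fun u w => h w u) z₂ z₁ := by
  simp only [regularize₂, regularize]
  ring

theorem norm_regularize_le_add {ρ : ℝ} {G : ℂ → ℂ} {z : ℂ} (hz : 0 ≤ z.re) :
    ‖regularize ρ G z‖ ≤ ‖G (((1 - ρ : ℝ) : ℂ) + (ρ : ℂ) * z)‖ + ‖G ((1 - ρ : ℝ) : ℂ)‖ := by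
  refine (norm_sub_le _ _).trans (add_le_add le_rfl ?_)
  rw [norm_div]
  exact div_le_self (norm_nonneg _) (one_le_norm_one_add hz)

section Regularize

variable {θ ρ a M δ : ℝ} {G : ℂ → ℂ} {z : ℂ}

theorem one_sub_mem_sector (hθ : 0 < θ) (hρ : ρ < 1) : ((1 - ρ : ℝ) : ℂ) ∈ Sector θ :=
  ofReal_mem_sector hθ (sub_pos.mpr hρ)

theorem one_sub_add_mul_mem_sector (hθ : θ ≤ Real.pi / 2) (hρ : ρ ∈ Ioo 0 1) (hz : z ∈ Sector θ) :
    ((1 - ρ : ℝ) : ℂ) + ρ * z ∈ Sector θ :=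
  ofReal_add_ofReal_mul_mem_sector hθ (sub_pos.mpr hρ.2) hρ.1 hz

theorem norm_regularize_le_mul_norm (hθ : θ ∈ Ioc 0 (Real.pi / 2)) (hρ : ρ ∈ Ioo 0 1)
    (hG : DifferentiableOn ℂ G (Sector θ)) (hGM : ∀ ζ ∈ Sector θ, ‖G ζ‖ ≤ M) (hδ : 0 < δ)
    (hball : ball ((1 - ρ : ℝ) : ℂ) δ ⊆ Sector θ) (hz : z ∈ Sector θ) :
    ‖regularize ρ G z‖ ≤ (2 * ρ / δ + 1) * M * ‖z‖ := by
  have hz₀ : 0 ≤ z.re := (re_pos_of_mem_sector hθ.2 hz).le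
  have hc := one_sub_mem_sector hθ.1 hρ.2
  have hφz := one_sub_add_mul_mem_sector hθ.2 hρ hz
  have hsplit : regularize ρ G z = (G (((1 - ρ : ℝ) : ℂ) + ρ * z) - G ((1 - ρ : ℝ) : ℂ))
      + G ((1 - ρ : ℝ) : ℂ) * (z / (1 + z)) := by
    have := one_add_ne_zero hz₀
    rw [regularize]; field_simp; ring
  have hnear : ‖G (((1 - ρ : ℝ) : ℂ) + ρ * z) - G ((1 - ρ : ℝ) : ℂ)‖ ≤ 2 * M / δ * (ρ * ‖z‖) := by
    have := hG.norm_sub_le_of_ball_subset hGM hδ hball hφz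
    rwa [add_sub_cancel_left, norm_mul, norm_real, Real.norm_of_nonneg hρ.1.le] at this
  have hfar : ‖G ((1 - ρ : ℝ) : ℂ) * (z / (1 + z))‖ ≤ M * ‖z‖ := by
    rw [norm_mul, norm_div]
    exact mul_le_mul (hGM _ hc) (div_le_self (norm_nonneg _) (one_le_norm_one_add hz₀))
      (by positivity) ((norm_nonneg _).trans (hGM _ hc))
  calc ‖regularize ρ G z‖ ≤ 2 * M / δ * (ρ * ‖z‖) + M * ‖z‖ :=
        hsplit ▸ (norm_add_le _ _).trans (add_le_add hnear hfar)
    _ = (2 * ρ / δ + 1) * M * ‖z‖ := by ring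

theorem norm_regularize_le_inv (hθ : θ ∈ Ioc 0 (Real.pi / 2)) (hρ : ρ ∈ Ioo 0 1) (ha : 0 ≤ a)
    (hM : 0 ≤ M) (hGM : ∀ ζ ∈ Sector θ, ‖G ζ‖ ≤ M * min ‖ζ‖ ‖ζ‖⁻¹ ^ a) (hz : z ∈ Sector θ) :
    ‖regularize ρ G z‖ ≤ M * (ρ⁻¹ * ‖z‖⁻¹) ^ a + M * ‖z‖⁻¹ := by
  have hz₀ : 0 ≤ z.re := (re_pos_of_mem_sector hθ.2 hz).le
  have hr : 0 < ‖z‖ := norm_pos_iff.mpr hz.1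
  have hc := one_sub_mem_sector hθ.1 hρ.2
  have hφz := one_sub_add_mul_mem_sector hθ.2 hρ hz
  set w := ((1 - ρ : ℝ) : ℂ) + ρ * z
  have hw : ρ * ‖z‖ ≤ ‖w‖ := by
    have := norm_le_norm_ofReal_add (a := 1 - ρ) (by linarith [hρ.2]) (z := ρ * z)
      (by simpa using mul_nonneg hρ.1.le hz₀)
    rwa [norm_mul, norm_real, Real.norm_of_nonneg hρ.1.le] at this
  have hGw : ‖G w‖ ≤ M * (ρ⁻¹ * ‖z‖⁻¹) ^ a := by
    refine (hGM w hφz).trans (mul_le_mul_of_nonneg_left ?_ hM)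
    refine Real.rpow_le_rpow (min_inv_pos (norm_pos_iff.mpr hφz.1)).le
      ((min_le_right _ _).trans ?_) ha
    rw [← mul_inv]
    exact inv_anti₀ (by have := hρ.1; positivity) hw
  have hGc : ‖G ((1 - ρ : ℝ) : ℂ) / (1 + z)‖ ≤ M * ‖z‖⁻¹ := by
    have hc_le : ‖G ((1 - ρ : ℝ) : ℂ)‖ ≤ M := by
      refine (hGM _ hc).trans (mul_le_of_le_one_right hM ?_)
      exact Real.rpow_le_one (min_inv_pos (norm_pos_iff.mpr hc.1)).le min_inv_le_one ha
    rw [norm_div, div_eq_mul_inv]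
    refine mul_le_mul hc_le (inv_anti₀ hr ?_) (by positivity) hM
    simpa using norm_le_norm_ofReal_add zero_le_one hz₀
  exact (norm_sub_le _ _).trans (add_le_add hGw hGc)

end Regularize

theorem exists_norm_regularize_le {θ ρ a : ℝ} (hθ : θ ∈ Ioc 0 (Real.pi / 2)) (hρ : ρ ∈ Ioo 0 1)
    (ha : a ∈ Icc 0 1) :
    ∃ κ > 0, ∀ (M : ℝ) (G : ℂ → ℂ), DifferentiableOn ℂ G (Sector θ) →
      (∀ ζ ∈ Sector θ, ‖G ζ‖ ≤ M * min ‖ζ‖ ‖ζ‖⁻¹ ^ a) →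
      ∀ z ∈ Sector θ, ‖regularize ρ G z‖ ≤ κ * M * min ‖z‖ ‖z‖⁻¹ ^ a := by
  have hc := one_sub_mem_sector hθ.1 hρ.2
  obtain ⟨δ, hδ, hball⟩ := Metric.isOpen_iff.mp
    (isOpen_sector hθ.1.le (hθ.2.trans (by linarith [Real.pi_pos]))) _ hc
  have hρ₀ := hρ.1
  refine ⟨2 * ρ / δ + ρ⁻¹ ^ a + 1, by positivity, fun M G hG hGM z hz => ?_⟩
  have hr : 0 < ‖z‖ := norm_pos_iff.mpr hz.1
  have hM : 0 ≤ M := nonneg_of_mul_nonneg_left ((norm_nonneg _).trans (hGM _ hc))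
    (Real.rpow_pos_of_pos (min_inv_pos (norm_pos_iff.mpr hc.1)) a)
  have hGM' : ∀ ζ ∈ Sector θ, ‖G ζ‖ ≤ M := fun ζ hζ =>
    (hGM ζ hζ).trans (mul_le_of_le_one_right hM
      (Real.rpow_le_one (min_inv_pos (norm_pos_iff.mpr hζ.1)).le min_inv_le_one ha.1))
  set t := min ‖z‖ ‖z‖⁻¹ with ht_def
  have ht : t ≤ t ^ a := min_inv_le_rpow hr ha.2
  have hρa : 0 ≤ ρ⁻¹ ^ a := Real.rpow_nonneg (inv_nonneg.mpr hρ₀.le) a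
  rcases le_total ‖z‖ 1 with hz1 | hz1
  · calc ‖regularize ρ G z‖ ≤ (2 * ρ / δ + 1) * M * ‖z‖ :=
          norm_regularize_le_mul_norm hθ hρ hG hGM' hδ hball hz
      _ = (2 * ρ / δ + 1) * M * t := by rw [ht_def, min_inv_of_le_one hr hz1]
      _ ≤ (2 * ρ / δ + ρ⁻¹ ^ a + 1) * M * t ^ a := by gcongr; linarith
  · calc ‖regularize ρ G z‖ ≤ M * (ρ⁻¹ * ‖z‖⁻¹) ^ a + M * ‖z‖⁻¹ :=
          norm_regularize_le_inv hθ hρ ha.1 hM hGM hz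
      _ = M * (ρ⁻¹ ^ a * t ^ a) + M * t := by
          rw [ht_def, min_inv_of_one_le hz1, Real.mul_rpow (by positivity) (by positivity)]
      _ ≤ M * (ρ⁻¹ ^ a * t ^ a) + M * t ^ a := by gcongr
      _ ≤ (2 * ρ / δ + ρ⁻¹ ^ a + 1) * M * t ^ a := by
          have : 0 ≤ M * t ^ a := mul_nonneg hM (by positivity)
          nlinarith [div_nonneg (mul_nonneg zero_le_two hρ₀.le) hδ.le]

theorem exists_norm_regularize₂_le {θ₁ θ₂ ρ C s₁ s₂ : ℝ} {h : ℂ → ℂ → ℂ}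
    (hθ₁ : θ₁ ∈ Ioc 0 (Real.pi / 2)) (hθ₂ : θ₂ ≤ Real.pi / 2) (hρ : ρ ∈ Ioo 0 1)
    (hh : DifferentiableOn ℂ (fun q : ℂ × ℂ => h q.1 q.2) (Sector θ₁ ×ˢ Sector θ₂))
    (hC : 0 ≤ C) (hs₁ : 0 < s₁) (hs₂ : 0 ≤ s₂)
    (hdecay : ∀ w ∈ Sector θ₁, ∀ u ∈ Sector θ₂,
      ‖h w u‖ ≤ C * decayWeight s₁ ‖w‖ * decayWeight s₂ ‖u‖) :
    ∃ κ > 0, ∀ z₁ ∈ Sector θ₁, ∀ z₂ ∈ Sector θ₂,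
      ‖regularize₂ ρ h z₁ z₂‖ ≤ κ * C * min ‖z₁‖ ‖z₁‖⁻¹ ^ min s₁ 1 := by
  have ha : min s₁ 1 ∈ Icc 0 1 := ⟨le_min hs₁.le zero_le_one, min_le_right _ _⟩
  obtain ⟨κ, hκ, hreg⟩ := exists_norm_regularize_le hθ₁ hρ ha
  refine ⟨2 * κ, by positivity, fun z₁ hz₁ z₂ hz₂ => ?_⟩
  have hc := one_sub_mem_sector (pos_of_mem_sector hz₂) hρ.2
  have hφz₂ := one_sub_add_mul_mem_sector hθ₂ hρ hz₂
  have hsep : ∀ u ∈ Sector θ₂, DifferentiableOn ℂ (fun w => h w u) (Sector θ₁) := fun u hu =>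
    hh.comp (f := fun w => (w, u)) (by fun_prop) fun w hw => ⟨hw, hu⟩
  have hbound : ∀ w ∈ Sector θ₁, ∀ u ∈ Sector θ₂, ‖h w u‖ ≤ C * min ‖w‖ ‖w‖⁻¹ ^ min s₁ 1 :=
    fun w hw u hu => (hdecay w hw u hu).trans <| mul_decayWeight_mul_decayWeight_le hC
      (norm_pos_iff.mpr hw.1) (norm_pos_iff.mpr hu.1) hs₂ ha.1 (min_le_left _ _)
  have hG : DifferentiableOn ℂ (fun w => regularize ρ (h w) z₂) (Sector θ₁) :=
    (hsep _ hφz₂).sub ((hsep _ hc).div_const _)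
  have hGM : ∀ w ∈ Sector θ₁, ‖regularize ρ (h w) z₂‖ ≤ 2 * C * min ‖w‖ ‖w‖⁻¹ ^ min s₁ 1 :=
    fun w hw => (norm_regularize_le_add (re_pos_of_mem_sector hθ₂ hz₂).le).trans
      (by linarith [hbound w hw _ hφz₂, hbound w hw _ hc])
  calc ‖regularize₂ ρ h z₁ z₂‖ ≤ κ * (2 * C) * min ‖z₁‖ ‖z₁‖⁻¹ ^ min s₁ 1 :=
        hreg _ _ hG hGM z₁ hz₁
    _ = 2 * κ * C * min ‖z₁‖ ‖z₁‖⁻¹ ^ min s₁ 1 := by ring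

theorem differentiableOn_regularize₂ {θ₁ θ₂ ρ : ℝ} {h : ℂ → ℂ → ℂ}
    (hθ₁ : θ₁ ∈ Ioc 0 (Real.pi / 2)) (hθ₂ : θ₂ ∈ Ioc 0 (Real.pi / 2)) (hρ : ρ ∈ Ioo 0 1)
    (hh : DifferentiableOn ℂ (fun q : ℂ × ℂ => h q.1 q.2) (Sector θ₁ ×ˢ Sector θ₂)) :
    DifferentiableOn ℂ (fun q : ℂ × ℂ => regularize₂ ρ h q.1 q.2) (Sector θ₁ ×ˢ Sector θ₂) := by
  set S := Sector θ₁ ×ˢ Sector θ₂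
  set c : ℂ := ((1 - ρ : ℝ) : ℂ)
  have hc₁ : c ∈ Sector θ₁ := one_sub_mem_sector hθ₁.1 hρ.2
  have hc₂ : c ∈ Sector θ₂ := one_sub_mem_sector hθ₂.1 hρ.2
  have hφ₁ : ∀ q ∈ S, c + ρ * q.1 ∈ Sector θ₁ := fun q hq =>
    one_sub_add_mul_mem_sector hθ₁.2 hρ hq.1
  have hφ₂ : ∀ q ∈ S, c + ρ * q.2 ∈ Sector θ₂ := fun q hq =>
    one_sub_add_mul_mem_sector hθ₂.2 hρ hq.2
  have hφφ : DifferentiableOn ℂ (fun q : ℂ × ℂ => h (c + ρ * q.1) (c + ρ * q.2)) S :=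
    hh.comp (f := fun q : ℂ × ℂ => (c + ρ * q.1, c + ρ * q.2)) (by fun_prop)
      fun q hq => ⟨hφ₁ q hq, hφ₂ q hq⟩
  have hφc : DifferentiableOn ℂ (fun q : ℂ × ℂ => h (c + ρ * q.1) c) S :=
    hh.comp (f := fun q : ℂ × ℂ => (c + ρ * q.1, c)) (by fun_prop) fun q hq => ⟨hφ₁ q hq, hc₂⟩
  have hcφ : DifferentiableOn ℂ (fun q : ℂ × ℂ => h c (c + ρ * q.2)) S :=
    hh.comp (f := fun q : ℂ × ℂ => (c, c + ρ * q.2)) (by fun_prop) fun q hq => ⟨hc₁, hφ₂ q hq⟩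
  have hinv₁ : DifferentiableOn ℂ (fun q : ℂ × ℂ => (1 + q.1)⁻¹) S :=
    DifferentiableOn.fun_inv (by fun_prop) fun q hq =>
      one_add_ne_zero (re_pos_of_mem_sector hθ₁.2 hq.1).le
  have hinv₂ : DifferentiableOn ℂ (fun q : ℂ × ℂ => (1 + q.2)⁻¹) S :=
    DifferentiableOn.fun_inv (by fun_prop) fun q hq =>
      one_add_ne_zero (re_pos_of_mem_sector hθ₂.2 hq.2).le
  simp only [regularize₂, regularize, div_eq_mul_inv]
  exact (hφφ.sub (hφc.mul hinv₂)).sub ((hcφ.sub ((differentiableOn_const _).mul hinv₂)).mul hinv₁)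

/-- the two-variable regularisation
`h̃(z₁,z₂) = h(φ_ρ z₁, φ_ρ z₂) − h(φ_ρ z₁, 1-ρ)/(1+z₂) − h(1-ρ, φ_ρ z₂)/(1+z₁)
 + h(1-ρ,1-ρ)/((1+z₁)(1+z₂))` of a function `h ∈ H^∞₀(Σ_{θ₁} × Σ_{θ₂})`
again lies in `H^∞₀(Σ_{θ₁} × Σ_{θ₂})`. -/
theorem stmt_7 (θ₁ θ₂ : ℝ) (hθ₁ : θ₁ ∈ Set.Ioo 0 (Real.pi / 2))
    (hθ₂ : θ₂ ∈ Set.Ioo 0 (Real.pi / 2))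
    (h : ℂ → ℂ → ℂ)
    (hhol : DifferentiableOn ℂ (fun q : ℂ × ℂ => h q.1 q.2) (Sector θ₁ ×ˢ Sector θ₂))
    (C s₁ s₂ : ℝ) (hC : 0 < C) (hs₁ : 0 < s₁) (hs₂ : 0 < s₂)
    (hdecay : ∀ z₁ ∈ Sector θ₁, ∀ z₂ ∈ Sector θ₂,
      ‖h z₁ z₂‖ ≤ C * (‖z₁‖ ^ s₁ / (1 + ‖z₁‖ ^ (2 * s₁))) *
        (‖z₂‖ ^ s₂ / (1 + ‖z₂‖ ^ (2 * s₂))))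
    (ρ : ℝ) (hρ : ρ ∈ Set.Ioo (0 : ℝ) 1)
    (φ : ℂ → ℂ) (hφ : ∀ z, φ z = ((1 - ρ : ℝ) : ℂ) + (ρ : ℂ) * z)
    (htil : ℂ → ℂ → ℂ)
    (hdef : ∀ z₁ z₂ : ℂ, htil z₁ z₂ =
      h (φ z₁) (φ z₂) - h (φ z₁) ((1 - ρ : ℝ) : ℂ) / (1 + z₂)
        - h ((1 - ρ : ℝ) : ℂ) (φ z₂) / (1 + z₁)
        + h ((1 - ρ : ℝ) : ℂ) ((1 - ρ : ℝ) : ℂ) / ((1 + z₁) * (1 + z₂))) :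
    DifferentiableOn ℂ (fun q : ℂ × ℂ => htil q.1 q.2) (Sector θ₁ ×ˢ Sector θ₂) ∧
    ∃ C' s₁' s₂' : ℝ, 0 < C' ∧ 0 < s₁' ∧ 0 < s₂' ∧
      ∀ z₁ ∈ Sector θ₁, ∀ z₂ ∈ Sector θ₂,
        ‖htil z₁ z₂‖ ≤ C' * (‖z₁‖ ^ s₁' / (1 + ‖z₁‖ ^ (2 * s₁'))) *
          (‖z₂‖ ^ s₂' / (1 + ‖z₂‖ ^ (2 * s₂'))) := by
  have htil_eq : htil = regularize₂ ρ h := by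
    funext z₁ z₂
    rw [hdef, regularize₂, regularize, regularize, regularize, hφ, hφ, ← div_div]
    ring
  subst htil_eq
  have hθ₁' := Ioo_subset_Ioc_self hθ₁
  have hθ₂' := Ioo_subset_Ioc_self hθ₂
  refine ⟨differentiableOn_regularize₂ hθ₁' hθ₂' hρ hhol, ?_⟩
  obtain ⟨κ₁, hκ₁, h₁⟩ := exists_norm_regularize₂_le hθ₁' hθ₂'.2 hρ hhol hC.le hs₁ hs₂.le hdecay
  obtain ⟨κ₂, hκ₂, h₂⟩ := exists_norm_regularize₂_le (h := fun u w => h w u) hθ₂' hθ₁'.2 hρ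
    (hhol.comp (f := fun q : ℂ × ℂ => (q.2, q.1)) (by fun_prop) fun q hq => ⟨hq.2, hq.1⟩)
    hC.le hs₂ hs₁.le fun u hu w hw => (hdecay w hw u hu).trans_eq (mul_right_comm _ _ _)
  refine ⟨4 * (max κ₁ κ₂ * C), min s₁ 1 / 2, min s₂ 1 / 2, by positivity, by positivity,
    by positivity, fun z₁ hz₁ z₂ hz₂ => le_mul_decayWeight_mul_decayWeight (by positivity)
      (norm_pos_iff.mpr hz₁.1) (norm_pos_iff.mpr hz₂.1) (by positivity) (by positivity) ?_ ?_⟩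
  · exact (h₁ z₁ hz₁ z₂ hz₂).trans (by gcongr; exact le_max_left _ _)
  · rw [regularize₂_comm]
    exact (h₂ z₂ hz₂ z₁ hz₁).trans (by gcongr; exact le_max_right _ _)
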